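/- arXiv:2509.20629 — 3 statements merged into one kernel-verified Lean document; each statement's English description precedes it below -/
import Mathlib

section
/- Let a, n be integers with n ≥ 1 and a² ≡ 1 (mod n). Set d₋ = gcd(a−1, n) and d₊ = gcd(a+1, n). Then d₋·d₊ = n or d₋·d₊ = 2n. -/
/-! Since `n ∣ (a - 1)(a + 1)`, `n` divides `d₋ d₊`. Conversely `d₋ d₊ = gcd(d₋, d₊) · lcm(d₋, d₊)`
divides `gcd(a - 1, a + 1) · n`, and `gcd(a - 1, a + 1) ∣ 2`. So `d₋ d₊ = k n` with `k ∣ 2`. -/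

namespace Nat

theorem gcd_mul_gcd_dvd_gcd_mul (k m n : ℕ) : gcd k m * gcd k n ∣ gcd m n * k := by
  rw [← gcd_mul_lcm (gcd k m) (gcd k n)]
  exact Nat.mul_dvd_mul (gcd_dvd_gcd_of_dvd_left _ (gcd_dvd_right k m) |>.trans
      (gcd_dvd_gcd_of_dvd_right _ (gcd_dvd_right k n)))
    (Nat.lcm_dvd (gcd_dvd_left k m) (gcd_dvd_left k n))

theorem eq_or_eq_two_mul_of_dvd_of_dvd_two_mul {m n : ℕ} (hn : 0 < n) (hnm : n ∣ m)
    (hmn : m ∣ 2 * n) : m = n ∨ m = 2 * n := by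
  obtain ⟨k, rfl⟩ := hnm
  have hk : k ∣ 2 := by
    rwa [Nat.mul_comm 2, Nat.mul_dvd_mul_iff_left hn] at hmn
  rcases (Nat.dvd_prime Nat.prime_two).mp hk with rfl | rfl
  · exact .inl n.mul_one
  · exact .inr (Nat.mul_comm n 2)

end Nat

namespace Int

theorem natAbs_dvd_gcd_mul_gcd {n b c : ℤ} (h : n ∣ b * c) :
    n.natAbs ∣ gcd b n * gcd c n := by
  rw [gcd_comm b, gcd_comm c, gcd_eq_natAbs, gcd_eq_natAbs]
  exact Nat.dvd_gcd_mul_gcd_iff_dvd_mul.mpr (by rwa [← natAbs_mul, natAbs_dvd_natAbs])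

theorem gcd_mul_gcd_dvd_gcd_mul_natAbs (b c n : ℤ) :
    gcd b n * gcd c n ∣ gcd b c * n.natAbs := by
  rw [gcd_comm b, gcd_comm c, gcd_eq_natAbs, gcd_eq_natAbs, gcd_eq_natAbs]
  exact Nat.gcd_mul_gcd_dvd_gcd_mul _ _ _

theorem gcd_sub_one_add_one_dvd_two (a : ℤ) : gcd (a - 1) (a + 1) ∣ 2 := by
  have h : (gcd (a - 1) (a + 1) : ℤ) ∣ (a + 1) - (a - 1) :=
    dvd_sub (gcd_dvd_right _ _) (gcd_dvd_left _ _)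
  rw [show a + 1 - (a - 1) = 2 by ring] at h
  exact_mod_cast h

end Int

/-- At a tame stacky node where `μₙ` acts with exponent `a` satisfying `a² ≡ 1 (mod n)`,
setting `d₋ = gcd(a-1, n)` and `d₊ = gcd(a+1, n)`, one has `d₋ · d₊ = n` or `d₋ · d₊ = 2n`. -/
theorem stmt_0 (n a : ℤ) (hn : 1 ≤ n) (ha : n ∣ a ^ 2 - 1) :
    (Int.gcd (a - 1) n : ℤ) * (Int.gcd (a + 1) n : ℤ) = n ∨
      (Int.gcd (a - 1) n : ℤ) * (Int.gcd (a + 1) n : ℤ) = 2 * n := by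
  have hprod : n ∣ (a - 1) * (a + 1) := by convert ha using 1; ring
  have hupper : Int.gcd (a - 1) n * Int.gcd (a + 1) n ∣ 2 * n.natAbs :=
    (Int.gcd_mul_gcd_dvd_gcd_mul_natAbs _ _ n).trans
      (Nat.mul_dvd_mul_right (Int.gcd_sub_one_add_one_dvd_two a) _)
  have hnatAbs := Nat.eq_or_eq_two_mul_of_dvd_of_dvd_two_mul (by omega)
    (Int.natAbs_dvd_gcd_mul_gcd hprod) hupper
  zify at hnatAbs
  rwa [abs_of_pos (by omega)] at hnatAbs
end

section
/- Let n ≥ 1, a an integer with a² ≡ 1 mod n, and m an integer with m(a−1) ≡ 0 mod n. Let G be the group generated by t and σ with relations tⁿ = 1, σtσ⁻¹ = tᵃ, σ² = tᵐ. Then the abelianization of G has order 2·gcd(a−1, n). -/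
/-!
Abelianizing the presentation turns its relations into the lattice `L ⊆ ℤ²` spanned by
`(n, 0)`, `(1 - a, 0)` and `(-m, 2)`, so the abelianization is `ℤ² ⧸ L`. By Bézout, `L`
consists of the `(x, 2k)` with `gcd(a - 1, n) ∣ x + m k`, and the points `(i, j)` with
`0 ≤ i < gcd(a - 1, n)`, `0 ≤ j < 2` form a system of coset representatives.
-/

/-- The relations `tⁿ = 1`, `σtσ⁻¹ = tᵃ`, `σ² = tᵐ` on two generators `t = 0`, `σ = 1`. -/
def nodeRels (n : ℕ) (a m : ℤ) : Set (FreeGroup (Fin 2)) :=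
  {FreeGroup.of 0 ^ n,
   FreeGroup.of 1 * FreeGroup.of 0 * (FreeGroup.of 1)⁻¹ * (FreeGroup.of 0 ^ a)⁻¹,
   FreeGroup.of 1 ^ 2 * (FreeGroup.of 0 ^ m)⁻¹}

theorem PresentedGroup.lift_comp_of_eq_one {α G : Type*} [Group G] {rels : Set (FreeGroup α)}
    (f : PresentedGroup rels →* G) {r : FreeGroup α} (hr : r ∈ rels) :
    FreeGroup.lift (f ∘ PresentedGroup.of) r = 1 := by
  have : FreeGroup.lift (f ∘ PresentedGroup.of) = f.comp (PresentedGroup.mk rels) :=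
    FreeGroup.ext_hom _ _ fun _ ↦ by simp [PresentedGroup.of]
  rw [this, MonoidHom.comp_apply, PresentedGroup.one_of_mem hr, map_one]

namespace nodeRels

variable (n : ℕ) (a m : ℤ)

def relLattice : AddSubgroup (ℤ × ℤ) :=
  AddSubgroup.closure {((n : ℤ), 0), (1 - a, 0), (-m, 2)}

variable {n a m} in
theorem mem_relLattice_iff {p : ℤ × ℤ} :
    p ∈ relLattice n a m ↔ ∃ k, p.2 = 2 * k ∧ (Int.gcd (a - 1) n : ℤ) ∣ p.1 + m * k := by
  constructor
  · intro h
    induction h using AddSubgroup.closure_induction with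
    | mem p hp =>
      rcases hp with rfl | rfl | rfl
      · exact ⟨0, rfl, by simpa using Int.gcd_dvd_right _ _⟩
      · exact ⟨0, rfl, by simpa using (Int.gcd_dvd_left (a - 1) n).neg_right⟩
      · exact ⟨1, rfl, by simp⟩
    | zero => exact ⟨0, rfl, by simp⟩
    | add p q _ _ hp hq =>
      obtain ⟨k, hk, hkd⟩ := hp
      obtain ⟨l, hl, hld⟩ := hq
      exact ⟨k + l, by simp [hk, hl, mul_add], by
        rw [Prod.fst_add, mul_add, add_add_add_comm]; exact dvd_add hkd hld⟩
    | neg p _ hp =>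
      obtain ⟨k, hk, hkd⟩ := hp
      exact ⟨-k, by simp [hk], by rw [Prod.fst_neg, mul_neg, ← neg_add]; exact hkd.neg_right⟩
  · obtain ⟨x, y⟩ := p
    rintro ⟨k, rfl, c, hc⟩
    have hbezout := Int.gcd_eq_gcd_ab (a - 1) n
    have hmem : k • (-m, 2) - (c * Int.gcdA (a - 1) n) • (1 - a, 0)
        + (c * Int.gcdB (a - 1) n) • ((n : ℤ), 0) ∈ relLattice n a m := by
      refine add_mem (sub_mem (zsmul_mem ?_ _) (zsmul_mem ?_ _)) (zsmul_mem ?_ _) <;>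
        exact AddSubgroup.subset_closure (by simp)
    convert hmem using 1
    simp only [Prod.smul_mk, Prod.mk_sub_mk, Prod.mk_add_mk, smul_eq_mul, Prod.mk.injEq]
    constructor
    · linear_combination hc + c * hbezout
    · ring

theorem card_quotient_relLattice (hn : n ≠ 0) :
    Nat.card ((ℤ × ℤ) ⧸ relLattice n a m) = 2 * Int.gcd (a - 1) n := by
  set d := Int.gcd (a - 1) n
  have : NeZero d := ⟨Int.gcd_ne_zero_right (by exact_mod_cast hn)⟩
  -- Only a bijection: for `d = 2`, `m = 1` the quotient is cyclic of order 4.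
  let normalForm (ij : ZMod d × ZMod 2) : (ℤ × ℤ) ⧸ relLattice n a m :=
    QuotientAddGroup.mk ((ij.1.val : ℤ), (ij.2.val : ℤ))
  have hbij : Function.Bijective normalForm := by
    constructor
    · rintro ⟨i, j⟩ ⟨i', j'⟩ h
      obtain ⟨k, hk, hd⟩ := mem_relLattice_iff.1 (QuotientAddGroup.eq.1 h)
      have hj := j.val_lt
      have hj' := j'.val_lt
      simp only [Prod.snd_add, Prod.snd_neg, Prod.fst_add, Prod.fst_neg] at hk hd
      obtain rfl : k = 0 := by omega
      have hi : ((i.val : ℤ) : ZMod d) = ((i'.val : ℤ) : ZMod d) :=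
        (ZMod.intCast_eq_intCast_iff_dvd_sub _ _ _).2 (by simpa [neg_add_eq_sub] using hd)
      simp only [Int.cast_natCast, ZMod.natCast_zmod_val] at hi
      rw [hi, ZMod.val_injective 2 (by omega : j.val = j'.val)]
    · intro q
      induction q using QuotientAddGroup.induction_on with | H p => ?_
      obtain ⟨x, y⟩ := p
      refine ⟨((x + m * (y / 2) : ℤ), (y : ZMod 2)), QuotientAddGroup.eq.2 ?_⟩
      refine mem_relLattice_iff.2 ⟨y / 2, ?_, ?_⟩
      · simp only [Prod.snd_add, Prod.snd_neg]
        rw [ZMod.val_intCast]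
        omega
      · simp only [Prod.fst_add, Prod.fst_neg]
        rw [ZMod.val_intCast, add_assoc, neg_add_eq_sub]
        exact Int.dvd_self_sub_emod
  rw [← Nat.card_eq_of_bijective _ hbij, Nat.card_prod, Nat.card_zmod, Nat.card_zmod, mul_comm]

open Multiplicative QuotientAddGroup

def quotientGen : Fin 2 → Multiplicative ((ℤ × ℤ) ⧸ relLattice n a m) :=
  ![ofAdd (mk (1, 0)), ofAdd (mk (0, 1))]

theorem lift_quotientGen_eq_one :
    ∀ r ∈ nodeRels n a m, FreeGroup.lift (quotientGen n a m) r = 1 := by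
  have key : ∀ p ∈ ({((n : ℤ), 0), (1 - a, 0), (-m, 2)} : Set (ℤ × ℤ)),
      ofAdd (mk p : (ℤ × ℤ) ⧸ relLattice n a m) = 1 := fun p hp ↦
    (QuotientAddGroup.eq_zero_iff p).2 (AddSubgroup.subset_closure hp)
  rintro r (rfl | rfl | rfl)
  · convert key ((n : ℤ), 0) (by simp) using 1
    simp [quotientGen, ← ofAdd_nsmul, ← mk_nsmul]
  · convert key (1 - a, 0) (by simp) using 1
    simp [quotientGen, ← ofAdd_zsmul, ← ofAdd_add, ← ofAdd_neg, ← mk_zsmul, ← mk_add,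
      ← mk_neg, sub_eq_add_neg]
  · convert key (-m, 2) (by simp) using 1
    simp [quotientGen, ← ofAdd_nsmul, ← ofAdd_zsmul, ← ofAdd_add, ← ofAdd_neg, ← mk_nsmul,
      ← mk_zsmul, ← mk_add, ← mk_neg]

def abelianizationToQuotient : Abelianization (PresentedGroup (nodeRels n a m)) →*
    Multiplicative ((ℤ × ℤ) ⧸ relLattice n a m) :=
  Abelianization.lift (PresentedGroup.toGroup (lift_quotientGen_eq_one n a m))

def abelianizationGen (i : Fin 2) : Abelianization (PresentedGroup (nodeRels n a m)) :=
  Abelianization.of (PresentedGroup.of i)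

def latticeToAbelianization :
    ℤ × ℤ →+ Additive (Abelianization (PresentedGroup (nodeRels n a m))) :=
  (zmultiplesHom _ (Additive.ofMul (abelianizationGen n a m 0))).coprod
    (zmultiplesHom _ (Additive.ofMul (abelianizationGen n a m 1)))

theorem relLattice_le_ker : relLattice n a m ≤ (latticeToAbelianization n a m).ker := by
  have key (r) (hr : r ∈ nodeRels n a m) :=
    congrArg Additive.ofMul (PresentedGroup.lift_comp_of_eq_one Abelianization.of hr)
  have h₁ := key _ (.inl rfl)
  have h₂ := key _ (.inr (.inl rfl))
  have h₃ := key _ (.inr (.inr rfl))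
  simp only [map_mul, map_inv, map_pow, map_zpow, FreeGroup.lift_apply_of, Function.comp_apply,
    ofMul_mul, ofMul_inv, ofMul_pow, ofMul_zpow, ofMul_one] at h₁ h₂ h₃
  rw [relLattice, AddSubgroup.closure_le]
  rintro p (rfl | rfl | rfl) <;>
    simp only [SetLike.mem_coe, AddMonoidHom.mem_ker, latticeToAbelianization,
      AddMonoidHom.coprod_apply, zmultiplesHom_apply, abelianizationGen]
  · linear_combination (norm := module) h₁
  · linear_combination (norm := module) h₂
  · linear_combination (norm := module) h₃

def quotientToAbelianization : Multiplicative ((ℤ × ℤ) ⧸ relLattice n a m) →*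
    Abelianization (PresentedGroup (nodeRels n a m)) :=
  AddMonoidHom.toMultiplicativeLeft (QuotientAddGroup.lift _ _ (relLattice_le_ker n a m))

theorem quotientToAbelianization_comp_abelianizationToQuotient :
    (quotientToAbelianization n a m).comp (abelianizationToQuotient n a m) = MonoidHom.id _ := by
  refine Abelianization.hom_ext _ _ (PresentedGroup.ext fun i ↦ ?_)
  fin_cases i <;> simp [quotientToAbelianization, abelianizationToQuotient, quotientGen,
    latticeToAbelianization, abelianizationGen]

theorem abelianizationToQuotient_surjective :
    Function.Surjective (abelianizationToQuotient n a m) := by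
  intro q
  induction q using Multiplicative.rec with | ofAdd q => ?_
  induction q using QuotientAddGroup.induction_on with | H p => ?_
  refine ⟨abelianizationGen n a m 0 ^ p.1 * abelianizationGen n a m 1 ^ p.2, ?_⟩
  simp [abelianizationToQuotient, quotientGen, abelianizationGen, ← ofAdd_zsmul, ← ofAdd_add,
    ← mk_zsmul, ← mk_add]

theorem card_abelianization (hn : n ≠ 0) :
    Nat.card (Abelianization (PresentedGroup (nodeRels n a m))) = 2 * Int.gcd (a - 1) n := by
  rw [← card_quotient_relLattice n a m hn, Nat.card_congr Multiplicative.ofAdd]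
  refine Nat.card_eq_of_bijective _ ⟨?_, abelianizationToQuotient_surjective n a m⟩
  exact Function.LeftInverse.injective
    (DFunLike.congr_fun (quotientToAbelianization_comp_abelianizationToQuotient n a m))

end nodeRels

theorem stmt_11_general (n : ℕ) (hn : 1 ≤ n) (a m : ℤ) :
    Nat.card (Abelianization (PresentedGroup (nodeRels n a m))) = 2 * Int.gcd (a - 1) n :=
  nodeRels.card_abelianization n a m (Nat.one_le_iff_ne_zero.1 hn)

/-- Let `n ≥ 1`, `a² ≡ 1 (mod n)` and `m(a−1) ≡ 0 (mod n)`.  The abelianization of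
`G = ⟨t, σ | tⁿ = 1, σtσ⁻¹ = tᵃ, σ² = tᵐ⟩` has order `2 · gcd(a−1, n)`. -/
theorem stmt_11 (n : ℕ) (hn : 1 ≤ n) (a m : ℤ) (ha : (n : ℤ) ∣ a ^ 2 - 1)
    (hm : (n : ℤ) ∣ m * (a - 1)) :
    Nat.card (Abelianization (PresentedGroup (nodeRels n a m))) = 2 * Int.gcd (a - 1) n :=
  stmt_11_general n hn a m
end

section
/- Let n ≥ 1, a an integer with a² ≡ 1 mod n, and m an integer with m(a−1) ≡ 0 mod n. Let G be the group with presentation ⟨t, σ | tⁿ = 1, σtσ⁻¹ = tᵃ, σ² = tᵐ⟩. If both m and d₋ = gcd(a−1,n) are even, then Gᵃᵇ ≅ ℤ/2 ⊕ ℤ/d₋; otherwise Gᵃᵇ ≅ ℤ/(2d₋). -/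
/-!
Written additively, `Gᵃᵇ` is the abelian group on `t, s` subject to `d₋ • t = 0` and
`2 • s = m • t`: conjugation becomes trivial, so `σtσ⁻¹ = tᵃ` turns into `(a - 1) • t = 0`, and
together with `n • t = 0` this is `d₋ • t = 0`.

If `m = 2c`, the element `s - c • t` has order dividing `2` and splits off the cyclic group
generated by `t`, giving `ℤ/2 ⊕ ℤ/d₋`. Otherwise some odd `2k + 1` is congruent to `m` modulo `d₋`
(take `m` itself, or `m + d₋` when `d₋` is odd), and `g = s - k • t` satisfies `2 • g = t` and
`(2k + 1) • g = s`, so `g` generates everything and has order dividing `2d₋`.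
-/

theorem PresentedGroup.ofMul_of_mk_eq_zero {α : Type*} {rels : Set (FreeGroup α)}
    {r : FreeGroup α} (hr : r ∈ rels) :
    Additive.ofMul (Abelianization.of (PresentedGroup.mk rels r)) = 0 := by
  rw [PresentedGroup.one_of_mem hr, map_one, ofMul_one]

namespace ZMod

variable {k : ℕ} {A : Type*} [AddGroup A]

theorem addMonoidHom_ext {f g : ZMod k →+ A} (h : f 1 = g 1) : f = g := by
  ext z
  obtain ⟨j, rfl⟩ := intCast_surjective z
  rw [← zsmul_one, map_zsmul, map_zsmul, h]

theorem prod_addMonoidHom_ext {l : ℕ} {f g : ZMod k × ZMod l →+ A} (h₁ : f (1, 0) = g (1, 0))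
    (h₂ : f (0, 1) = g (0, 1)) : f = g := by
  ext ⟨x, y⟩
  obtain ⟨i, rfl⟩ := intCast_surjective x
  obtain ⟨j, rfl⟩ := intCast_surjective y
  have hij : ((i : ZMod k), (j : ZMod l)) = i • (1, 0) + j • (0, 1) := by ext <;> simp
  rw [hij, map_add, map_add, map_zsmul, map_zsmul, map_zsmul, map_zsmul, h₁, h₂]

variable (k)

def zmultiplesHom (g : A) (hg : k • g = 0) : ZMod k →+ A :=
  lift k ⟨_root_.zmultiplesHom A g, by simpa using hg⟩

@[simp]
theorem zmultiplesHom_intCast (g : A) (hg : k • g = 0) (j : ℤ) :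
    zmultiplesHom k g hg j = j • g :=
  lift_coe k _ j

@[simp]
theorem zmultiplesHom_one (g : A) (hg : k • g = 0) : zmultiplesHom k g hg 1 = g := by
  simpa using zmultiplesHom_intCast k g hg 1

end ZMod

theorem Int.exists_odd_eq_add_mul {m : ℤ} {d : ℕ} (h : ¬(Even m ∧ Even d)) :
    ∃ k q : ℤ, 2 * k + 1 = m + d * q := by
  rcases Int.even_or_odd m with ⟨c, rfl⟩ | ⟨k, rfl⟩
  · obtain ⟨e, he⟩ := Nat.not_even_iff_odd.1 fun hd => h ⟨⟨c, rfl⟩, hd⟩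
    exact ⟨c + e, 1, by rw [he]; push_cast; ring⟩
  · exact ⟨k, 0, by ring⟩

abbrev NodeAb (n : ℕ) (a m : ℤ) : Type :=
  Additive (Abelianization (PresentedGroup (nodeRels n a m)))

namespace NodeAb

variable {n : ℕ} {a m : ℤ}

def t : NodeAb n a m := Additive.ofMul (Abelianization.of (PresentedGroup.of 0))

def s : NodeAb n a m := Additive.ofMul (Abelianization.of (PresentedGroup.of 1))

theorem gcd_nsmul_t : Int.gcd (a - 1) n • (t : NodeAb n a m) = 0 := by
  have h₁ := PresentedGroup.ofMul_of_mk_eq_zero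
    (show FreeGroup.of 0 ^ n ∈ nodeRels n a m from .inl rfl)
  have h₂ := PresentedGroup.ofMul_of_mk_eq_zero (show FreeGroup.of 1 * FreeGroup.of 0 *
    (FreeGroup.of 1)⁻¹ * (FreeGroup.of 0 ^ a)⁻¹ ∈ nodeRels n a m from .inr (.inl rfl))
  simp only [map_mul, map_pow, map_inv, map_zpow, ofMul_mul, ofMul_pow, ofMul_inv,
    ofMul_zpow] at h₁ h₂
  change n • t = 0 at h₁
  change s + t + -s + -(a • t) = 0 at h₂
  rw [intGCD_nsmul_eq_zero, sub_zsmul, one_zsmul, natCast_zsmul]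
  exact ⟨by rw [← neg_eq_zero, ← h₂]; abel, h₁⟩

theorem two_nsmul_s : 2 • (s : NodeAb n a m) = m • t := by
  have h := PresentedGroup.ofMul_of_mk_eq_zero
    (show FreeGroup.of 1 ^ 2 * (FreeGroup.of 0 ^ m)⁻¹ ∈ nodeRels n a m from .inr (.inr rfl))
  simp only [map_mul, map_pow, map_inv, map_zpow, ofMul_mul, ofMul_pow, ofMul_inv,
    ofMul_zpow] at h
  exact add_neg_eq_zero.mp h

theorem two_nsmul_s_sub_zsmul_t {k q : ℤ} (hkq : 2 * k + 1 = m + Int.gcd (a - 1) n * q) :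
    2 • (s - k • t : NodeAb n a m) = t := by
  have hd : ((Int.gcd (a - 1) n : ℤ) * q) • (t : NodeAb n a m) = 0 := by
    rw [mul_comm, mul_zsmul, natCast_zsmul, gcd_nsmul_t, zsmul_zero]
  rw [nsmul_sub, two_nsmul_s, ← natCast_zsmul, smul_smul, Nat.cast_ofNat, ← sub_smul,
    show m - 2 * k = 1 - Int.gcd (a - 1) n * q by linear_combination -hkq, sub_smul, one_smul,
    hd, sub_zero]

section lift

variable {B : Type*} [AddCommGroup B]

def lift (x y : B) (hx : Int.gcd (a - 1) n • x = 0) (hy : 2 • y = m • x) : NodeAb n a m →+ B :=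
  MonoidHom.toAdditiveLeft <| Abelianization.lift <|
    PresentedGroup.toGroup (f := fun i => Multiplicative.ofAdd (![x, y] i)) <| by
      obtain ⟨hxa, hxn⟩ := intGCD_nsmul_eq_zero.1 hx
      rw [sub_zsmul, one_zsmul, add_neg_eq_zero] at hxa
      rintro r (rfl | rfl | rfl) <;>
        simp only [map_mul, map_pow, map_inv, map_zpow, FreeGroup.lift_apply_of,
          Matrix.cons_val_zero, Matrix.cons_val_one, Matrix.cons_val_fin_one, ← ofAdd_nsmul,
          ← ofAdd_zsmul, ← ofAdd_neg, ← ofAdd_add, ofAdd_eq_one]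
      · exact_mod_cast hxn
      · rw [hxa]; abel
      · rw [hy, add_neg_cancel]

variable (x y : B) (hx : Int.gcd (a - 1) n • x = 0) (hy : 2 • y = m • x)

@[simp]
theorem lift_t : lift x y hx hy t = x := by
  simp [lift, t, PresentedGroup.toGroup.of]

@[simp]
theorem lift_s : lift x y hx hy s = y := by
  simp [lift, s, PresentedGroup.toGroup.of]

@[ext]
theorem hom_ext {f g : NodeAb n a m →+ B} (ht : f t = g t) (hs : f s = g s) : f = g :=
  MonoidHom.toAdditiveLeft.symm.injective <| Abelianization.hom_ext _ _ <|
    PresentedGroup.ext fun i => by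
      fin_cases i
      exacts [congrArg Multiplicative.ofAdd ht, congrArg Multiplicative.ofAdd hs]

end lift

def addEquivZModProd (c : ℤ) (hc : m = 2 * c) :
    NodeAb n a m ≃+ ZMod 2 × ZMod (Int.gcd (a - 1) n) := by
  have hx : Int.gcd (a - 1) n • ((0, 1) : ZMod 2 × ZMod (Int.gcd (a - 1) n)) = 0 := by
    ext <;> simp
  have hy : 2 • ((1, c) : ZMod 2 × ZMod (Int.gcd (a - 1) n)) = m • (0, 1) := by
    ext
    · simp only [Prod.smul_mk, smul_zero]
      decide
    · simp [hc]
  have hg : 2 • (s - c • t : NodeAb n a m) = 0 := by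
    rw [nsmul_sub, two_nsmul_s, ← natCast_zsmul, smul_smul, Nat.cast_ofNat, ← hc, sub_self]
  refine (lift _ _ hx hy).toAddEquiv
    ((ZMod.zmultiplesHom 2 _ hg).coprod (ZMod.zmultiplesHom _ t gcd_nsmul_t)) ?_ ?_
  · ext <;> simp
  · refine ZMod.prod_addMonoidHom_ext ?_ ?_ <;> simp

def addEquivZMod (k q : ℤ) (hkq : 2 * k + 1 = m + Int.gcd (a - 1) n * q) :
    NodeAb n a m ≃+ ZMod (2 * Int.gcd (a - 1) n) := by
  have hx : Int.gcd (a - 1) n • ((2 : ℤ) : ZMod (2 * Int.gcd (a - 1) n)) = 0 := by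
    have : Int.gcd (a - 1) n • ((2 : ℤ) : ZMod (2 * Int.gcd (a - 1) n)) =
        ((2 * Int.gcd (a - 1) n : ℕ) : ZMod (2 * Int.gcd (a - 1) n)) := by
      push_cast; rw [nsmul_eq_mul]; ring
    rw [this, ZMod.natCast_self]
  have hy : 2 • ((2 * k + 1 : ℤ) : ZMod (2 * Int.gcd (a - 1) n)) = m • ((2 : ℤ) : ZMod _) := by
    have := (ZMod.intCast_eq_intCast_iff_dvd_sub (2 * (2 * k + 1)) (m * 2)
      (2 * Int.gcd (a - 1) n)).2 ⟨-q, by push_cast; linear_combination (-2) * hkq⟩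
    push_cast at this ⊢
    rw [nsmul_eq_mul, zsmul_eq_mul]
    exact_mod_cast this
  have hg : (2 * Int.gcd (a - 1) n) • (s - k • t : NodeAb n a m) = 0 := by
    rw [mul_nsmul, two_nsmul_s_sub_zsmul_t hkq, gcd_nsmul_t]
  refine (lift _ _ hx hy).toAddEquiv (ZMod.zmultiplesHom _ _ hg) ?_ ?_
  · refine hom_ext ?_ ?_
    · rw [AddMonoidHom.comp_apply, lift_t, ZMod.zmultiplesHom_intCast, two_zsmul, ← two_nsmul,
        two_nsmul_s_sub_zsmul_t hkq, AddMonoidHom.id_apply]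
    · rw [AddMonoidHom.comp_apply, lift_s, ZMod.zmultiplesHom_intCast, add_zsmul, one_zsmul,
        mul_zsmul', two_zsmul, ← two_nsmul, two_nsmul_s_sub_zsmul_t hkq, add_sub_cancel,
        AddMonoidHom.id_apply]
  · refine ZMod.addMonoidHom_ext ?_
    rw [AddMonoidHom.comp_apply, ZMod.zmultiplesHom_one, map_sub, map_zsmul, lift_s, lift_t,
      AddMonoidHom.id_apply, zsmul_eq_mul]
    push_cast
    ring

end NodeAb

theorem stmt_12_general (n : ℕ) (a m : ℤ) :
    (Even m ∧ Even (Int.gcd (a - 1) n) →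
      Nonempty (Abelianization (PresentedGroup (nodeRels n a m)) ≃*
        Multiplicative (ZMod 2 × ZMod (Int.gcd (a - 1) n)))) ∧
    (¬ (Even m ∧ Even (Int.gcd (a - 1) n)) →
      Nonempty (Abelianization (PresentedGroup (nodeRels n a m)) ≃*
        Multiplicative (ZMod (2 * Int.gcd (a - 1) n)))) := by
  refine ⟨fun ⟨hm, _⟩ => ?_, fun h => ?_⟩
  · obtain ⟨c, hc⟩ := even_iff_two_dvd.1 hm
    exact ⟨AddEquiv.toMultiplicativeRight (NodeAb.addEquivZModProd c hc)⟩
  · obtain ⟨k, q, hkq⟩ := Int.exists_odd_eq_add_mul h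
    exact ⟨AddEquiv.toMultiplicativeRight (NodeAb.addEquivZMod k q hkq)⟩

/-- Let `n ≥ 1`, `a² ≡ 1 (mod n)` and `m(a−1) ≡ 0 (mod n)`, and let
`G = ⟨t, σ | tⁿ = 1, σtσ⁻¹ = tᵃ, σ² = tᵐ⟩`, `d₋ = gcd(a−1, n)`.  If both `m` and `d₋` are even
then `Gᵃᵇ ≅ ℤ/2 ⊕ ℤ/d₋`; otherwise `Gᵃᵇ ≅ ℤ/2d₋`. -/
theorem stmt_12 (n : ℕ) (hn : 1 ≤ n) (a m : ℤ) (ha : (n : ℤ) ∣ a ^ 2 - 1)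
    (hm : (n : ℤ) ∣ m * (a - 1)) :
    (Even m ∧ Even (Int.gcd (a - 1) n) →
      Nonempty (Abelianization (PresentedGroup (nodeRels n a m)) ≃*
        Multiplicative (ZMod 2 × ZMod (Int.gcd (a - 1) n)))) ∧
    (¬ (Even m ∧ Even (Int.gcd (a - 1) n)) →
      Nonempty (Abelianization (PresentedGroup (nodeRels n a m)) ≃*
        Multiplicative (ZMod (2 * Int.gcd (a - 1) n)))) :=
  stmt_12_general n a m
end
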